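/- Let f be a pseudo-polynomial with leading exponent θ_d, N a sufficiently large positive integer, P the largest real solution of f(P) = N, and let s be an integer with s > θ_d. Then the singular integral J(N) = ∫_{−1/2}^{1/2} V(α)^s e(−αN) dα satisfies J(N) ≪ P^{s − θ_d}, with implied constant depending only on f and s. -/

import Mathlib

open Finset

noncomputable def e (x : ℝ) : ℂ := Complex.exp (2 * Real.pi * Complex.I * x)

/-- A pseudo-polynomial `f(x) = a_d x^{θ_d} + ⋯ + a_1 x^{θ_1}` with real coefficients,
`a_d > 0`, real exponents `1 ≤ θ_1 < ⋯ < θ_d`, and at least one non-integral exponent. -/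
structure PseudoPoly where
  d : ℕ
  d_pos : 1 ≤ d
  a : ℕ → ℝ
  θ : ℕ → ℝ
  a_pos : 0 < a d
  θ_one : 1 ≤ θ 1
  θ_mono : ∀ i, 1 ≤ i → i < d → θ i < θ (i + 1)
  nonint : ∃ i, 1 ≤ i ∧ i ≤ d ∧ ∀ n : ℤ, θ i ≠ (n : ℝ)

noncomputable def PseudoPoly.eval (f : PseudoPoly) (x : ℝ) : ℝ :=
  ∑ i ∈ Finset.Icc 1 f.d, f.a i * x ^ f.θ i

/-- `P` is the largest real solution of `f(P) = N`. -/
def PseudoPoly.IsLargestRoot (f : PseudoPoly) (N : ℝ) (P : ℝ) : Prop :=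
  f.eval P = N ∧ ∀ x : ℝ, f.eval x = N → x ≤ P

/-- `V(α) = (1/a_d)^{1/θ_d} (1/θ_d) Σ_{m=1}^{N} m^{1/θ_d − 1} e(αm)`. -/
noncomputable def V (f : PseudoPoly) (N : ℕ) (α : ℝ) : ℂ :=
  (((1 / f.a f.d) ^ (1 / f.θ f.d) * (1 / f.θ f.d) : ℝ) : ℂ) *
    ∑ m ∈ Finset.Icc 1 N, (((m : ℝ) ^ (1 / f.θ f.d - 1) : ℝ) : ℂ) * e (α * m)

/-!
For `0 < |α| ≤ 1/2`, partial summation against the geometric sums `∑ e(αm)`, which are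
`O(1/|α|)`, gives `V(α) ≪ |α|^{-1/θ_d}`, while trivially `V(α) ≪ N^{1/θ_d}`. Splitting the
integral at `|α| = 1/N`, the central part is `≪ N^{s/θ_d - 1}`, and so is the rest, which
converges because `s/θ_d > 1`. Finally `N = f(P) ≤ (∑ |a_i|) P^{θ_d}` as soon as `P ≥ 1`, and
`P ≥ 1` once `N ≥ f(1)`, since `f` is continuous and tends to infinity.
-/

open Filter Topology

lemma norm_e (x : ℝ) : ‖e x‖ = 1 := by
  rw [e, show 2 * Real.pi * Complex.I * x = ((2 * Real.pi * x : ℝ) : ℂ) * Complex.I by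
    push_cast; ring, Complex.norm_exp_ofReal_mul_I]

lemma e_mul_natCast (α : ℝ) (m : ℕ) : e (α * m) = e α ^ m := by
  rw [e, e, ← Complex.exp_nat_mul]
  push_cast
  ring_nf

lemma e_neg (x : ℝ) : e (-x) = starRingEnd ℂ (e x) := by
  rw [e, e, ← Complex.exp_conj]
  simp only [map_mul, Complex.conj_I, Complex.conj_ofReal, map_ofNat, Complex.ofReal_neg]
  ring_nf

@[fun_prop]
lemma continuous_e : Continuous e := by
  unfold e
  fun_prop

lemma four_mul_le_norm_e_sub_one {α : ℝ} (h0 : 0 < α) (h2 : α ≤ 1 / 2) :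
    4 * α ≤ ‖e α - 1‖ := by
  have hsin : 2 * α ≤ Real.sin (Real.pi * α) := by
    have hjordan := Real.mul_le_sin (x := Real.pi * α) (by positivity) (by nlinarith [Real.pi_pos])
    rwa [div_mul_eq_mul_div, mul_div_assoc, mul_div_cancel_left₀ _ Real.pi_ne_zero] at hjordan
  have hnorm : ‖e α - 1‖ = 2 * Real.sin (Real.pi * α) := by
    rw [e, show 2 * Real.pi * Complex.I * α = Complex.I * ((2 * Real.pi * α : ℝ) : ℂ) by
      push_cast; ring, Complex.norm_exp_I_mul_ofReal_sub_one, Real.norm_eq_abs,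
      show 2 * Real.pi * α / 2 = Real.pi * α by ring, abs_of_nonneg (by linarith)]
  linarith

lemma norm_sum_range_e_le {α : ℝ} (h0 : 0 < α) (h2 : α ≤ 1 / 2) (k : ℕ) :
    ‖∑ m ∈ range k, e (α * m)‖ ≤ 1 / (2 * α) := by
  have hgap := four_mul_le_norm_e_sub_one h0 h2
  have hne : e α ≠ 1 := fun h => by simp [h] at hgap; linarith
  simp_rw [e_mul_natCast, geom_sum_eq hne, norm_div]
  have hnum : ‖e α ^ k - 1‖ ≤ 2 := by
    calc ‖e α ^ k - 1‖ ≤ ‖e α ^ k‖ + ‖(1 : ℂ)‖ := norm_sub_le _ _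
      _ = 2 := by rw [norm_pow, norm_e]; norm_num
  calc ‖e α ^ k - 1‖ / ‖e α - 1‖ ≤ 2 / (4 * α) := div_le_div₀ zero_le_two hnum (by positivity) hgap
    _ = 1 / (2 * α) := by field_simp; ring

lemma norm_sum_Ioc_smul_le_of_antitoneOn {E : Type*} [SeminormedAddCommGroup E]
    [NormedSpace ℝ E] {f : ℕ → ℝ} {g : ℕ → E} {m : ℕ} {B : ℝ}
    (hf : AntitoneOn f (Set.Ici (m + 1))) (hf0 : ∀ i, 0 ≤ f i)
    (hg : ∀ k, ‖∑ i ∈ range k, g i‖ ≤ B) (n : ℕ) :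
    ‖∑ i ∈ Ioc m n, f i • g i‖ ≤ 2 * B * f (m + 1) := by
  have hB : 0 ≤ B := by simpa using hg 0
  rcases le_or_gt n m with hnm | hmn
  · rw [Ioc_eq_empty_of_le hnm, sum_empty, norm_zero]
    exact mul_nonneg (mul_nonneg zero_le_two hB) (hf0 _)
  have hIoc : Ioc m (n - 1) = Ico (m + 1) n := by
    rw [← Ico_add_one_add_one_eq_Ioc, Nat.sub_add_cancel (by omega)]
  have hstep : ∀ i ∈ Ioc m (n - 1), ‖(f (i + 1) - f i) • ∑ j ∈ range (i + 1), g j‖ ≤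
      (f i - f (i + 1)) * B := by
    intro i hi
    have hi' : m + 1 ≤ i := (mem_Ioc.mp hi).1
    have hdec : f (i + 1) ≤ f i :=
      hf (Set.mem_Ici.mpr hi') (Set.mem_Ici.mpr (by omega)) (by omega)
    rw [norm_smul, Real.norm_eq_abs, abs_of_nonpos (by linarith), neg_sub]
    exact mul_le_mul_of_nonneg_left (hg _) (by linarith)
  have htel : ∑ i ∈ Ioc m (n - 1), (f i - f (i + 1)) = f (m + 1) - f n := by
    rw [hIoc, ← neg_sub (f n), ← sum_Ico_sub f (by omega), ← sum_neg_distrib]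
    simp only [neg_sub]
  rw [sum_Ioc_by_parts f g hmn]
  calc ‖f n • ∑ i ∈ range (n + 1), g i - f (m + 1) • ∑ i ∈ range (m + 1), g i -
        ∑ i ∈ Ioc m (n - 1), (f (i + 1) - f i) • ∑ j ∈ range (i + 1), g j‖
      ≤ f n * B + f (m + 1) * B + ∑ i ∈ Ioc m (n - 1), (f i - f (i + 1)) * B := by
        refine (norm_sub_le _ _).trans (add_le_add ((norm_sub_le _ _).trans (add_le_add ?_ ?_))
          ((norm_sum_le _ _).trans (sum_le_sum hstep)))
        all_goals
          rw [norm_smul, Real.norm_eq_abs, abs_of_nonneg (hf0 _)]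
          exact mul_le_mul_of_nonneg_left (hg _) (hf0 _)
    _ = 2 * B * f (m + 1) := by rw [← sum_mul, htel]; ring

lemma mul_rpow_sub_one_le_rpow_sub_rpow {β x : ℝ} (hβ0 : 0 ≤ β) (hβ1 : β ≤ 1) (hx : 0 ≤ x) :
    β * (x + 1) ^ (β - 1) ≤ (x + 1) ^ β - x ^ β := by
  have hx1 : 0 < x + 1 := by linarith
  have hbern := rpow_one_add_le_one_add_mul_self
    (by rw [neg_div, neg_le_neg_iff, div_le_one hx1]; linarith : -1 ≤ -1 / (x + 1)) hβ0 hβ1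
  rw [show 1 + -1 / (x + 1) = x / (x + 1) by field_simp; ring, Real.div_rpow hx hx1.le,
    div_le_iff₀ (Real.rpow_pos_of_pos hx1 β)] at hbern
  rw [Real.rpow_sub_one hx1.ne']
  have hexpand : (1 + β * (-1 / (x + 1))) * (x + 1) ^ β =
      (x + 1) ^ β - β * ((x + 1) ^ β / (x + 1)) := by
    ring
  linarith

lemma sum_Icc_rpow_sub_one_le {β : ℝ} (hβ0 : 0 < β) (hβ1 : β ≤ 1) (N : ℕ) :
    ∑ m ∈ Icc 1 N, (m : ℝ) ^ (β - 1) ≤ (N : ℝ) ^ β / β := by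
  induction N with
  | zero => simp [Real.zero_rpow hβ0.ne']
  | succ n ih =>
    rw [sum_Icc_succ_top (by omega), Nat.cast_succ]
    have hstep := mul_rpow_sub_one_le_rpow_sub_rpow hβ0.le hβ1 (Nat.cast_nonneg n)
    rw [le_div_iff₀ hβ0] at ih ⊢
    linarith

noncomputable def rpowExpSum (β : ℝ) (N : ℕ) (α : ℝ) : ℂ :=
  ∑ m ∈ Icc 1 N, (((m : ℝ) ^ (β - 1) : ℝ) : ℂ) * e (α * m)

lemma norm_rpowExpSum_le {β : ℝ} (hβ0 : 0 < β) (hβ1 : β ≤ 1) (N : ℕ) (α : ℝ) :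
    ‖rpowExpSum β N α‖ ≤ (N : ℝ) ^ β / β := by
  refine (norm_sum_le _ _).trans (le_of_eq_of_le (sum_congr rfl fun m _ => ?_)
    (sum_Icc_rpow_sub_one_le hβ0 hβ1 N))
  rw [norm_mul, norm_e, mul_one, Complex.norm_real, Real.norm_eq_abs,
    abs_of_nonneg (Real.rpow_nonneg (Nat.cast_nonneg m) _)]

lemma norm_rpowExpSum_le_rpow_neg {β : ℝ} (hβ0 : 0 < β) (hβ1 : β ≤ 1) (N : ℕ) {α : ℝ}
    (h0 : 0 < α) (h2 : α ≤ 1 / 2) : ‖rpowExpSum β N α‖ ≤ (1 / β + 1) * α ^ (-β) := by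
  -- below `⌊1/α⌋` the trivial bound, above it partial summation against geometric sums
  have hαβ : α ^ (-β) = α⁻¹ ^ β := by rw [Real.rpow_neg h0.le, Real.inv_rpow h0.le]
  have hhead : ∀ K : ℕ, (K : ℝ) ≤ α⁻¹ → ‖rpowExpSum β K α‖ ≤ α ^ (-β) / β := fun K hK =>
    (norm_rpowExpSum_le hβ0 hβ1 K α).trans (by rw [hαβ]; gcongr)
  set M := ⌊α⁻¹⌋₊
  have hM : (M : ℝ) ≤ α⁻¹ := Nat.floor_le (by positivity)
  have hpos : 0 ≤ α ^ (-β) := by positivity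
  rcases le_or_gt N M with hNM | hMN
  · calc ‖rpowExpSum β N α‖ ≤ α ^ (-β) / β := hhead N (le_trans (by exact_mod_cast hNM) hM)
      _ ≤ (1 / β + 1) * α ^ (-β) := by rw [add_mul, one_div_mul_eq_div]; linarith
  have hsplit : rpowExpSum β N α =
      rpowExpSum β M α + ∑ m ∈ Ioc M N, (m : ℝ) ^ (β - 1) • e (α * m) := by
    have hIcc : ∀ n : ℕ, Icc 1 n = Ioc 0 n := Finset.Icc_add_one_left_eq_Ioc 0
    simp only [rpowExpSum, Complex.real_smul, hIcc]
    exact (sum_Ioc_consecutive _ (Nat.zero_le M) hMN.le).symm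
  have hanti : AntitoneOn (fun m : ℕ => (m : ℝ) ^ (β - 1)) (Set.Ici (M + 1)) :=
    fun a ha b _ hab => Real.rpow_le_rpow_of_nonpos (Nat.cast_pos.mpr (by simp at ha; omega))
      (Nat.cast_le.mpr hab) (by linarith)
  have htail : ‖∑ m ∈ Ioc M N, (m : ℝ) ^ (β - 1) • e (α * m)‖ ≤ α ^ (-β) := by
    refine (norm_sum_Ioc_smul_le_of_antitoneOn hanti (fun m => by positivity)
      (norm_sum_range_e_le h0 h2) N).trans ?_
    have hdecr : ((M + 1 : ℕ) : ℝ) ^ (β - 1) ≤ α⁻¹ ^ (β - 1) :=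
      Real.rpow_le_rpow_of_nonpos (by positivity) (by push_cast; exact (Nat.lt_floor_add_one _).le)
        (by linarith)
    calc 2 * (1 / (2 * α)) * ((M + 1 : ℕ) : ℝ) ^ (β - 1) ≤ α⁻¹ * α⁻¹ ^ (β - 1) := by
          rw [show 2 * (1 / (2 * α)) = α⁻¹ by field_simp]; gcongr
      _ = α ^ (-β) := by rw [hαβ, Real.rpow_sub_one (by positivity)]; field_simp
  calc ‖rpowExpSum β N α‖ ≤ α ^ (-β) / β + α ^ (-β) := by
        rw [hsplit]; exact (norm_add_le _ _).trans (add_le_add (hhead M hM) htail)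
    _ = (1 / β + 1) * α ^ (-β) := by ring

lemma rpowExpSum_neg (β : ℝ) (N : ℕ) (α : ℝ) :
    rpowExpSum β N (-α) = starRingEnd ℂ (rpowExpSum β N α) := by
  simp only [rpowExpSum, map_sum, map_mul, Complex.conj_ofReal, ← e_neg, neg_mul]

lemma norm_rpowExpSum_le_abs_rpow_neg {β : ℝ} (hβ0 : 0 < β) (hβ1 : β ≤ 1) (N : ℕ) {α : ℝ}
    (h0 : 0 < |α|) (h2 : |α| ≤ 1 / 2) : ‖rpowExpSum β N α‖ ≤ (1 / β + 1) * |α| ^ (-β) := by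
  rcases lt_or_gt_of_ne (abs_pos.mp h0) with hneg | hpos
  · rw [abs_of_neg hneg] at h0 h2 ⊢
    have h := norm_rpowExpSum_le_rpow_neg hβ0 hβ1 N h0 h2
    rwa [rpowExpSum_neg, Complex.norm_conj] at h
  · rw [abs_of_pos hpos] at h0 h2 ⊢
    exact norm_rpowExpSum_le_rpow_neg hβ0 hβ1 N h0 h2

namespace PseudoPoly

variable (f : PseudoPoly)

lemma strictMonoOn_θ : StrictMonoOn f.θ (Set.Icc 1 f.d) :=
  strictMonoOn_of_lt_add_one Set.ordConnected_Icc fun i _ hi hi1 =>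
    f.θ_mono i hi.1 (by simp only [Set.mem_Icc] at hi1; omega)

lemma θ_le_θ_d {i : ℕ} (h1 : 1 ≤ i) (hi : i ≤ f.d) : f.θ i ≤ f.θ f.d :=
  f.strictMonoOn_θ.monotoneOn ⟨h1, hi⟩ ⟨f.d_pos, le_rfl⟩ hi

lemma θ_lt_θ_d {i : ℕ} (h1 : 1 ≤ i) (hi : i < f.d) : f.θ i < f.θ f.d :=
  f.strictMonoOn_θ ⟨h1, hi.le⟩ ⟨f.d_pos, le_rfl⟩ hi

lemma one_le_θ {i : ℕ} (h1 : 1 ≤ i) (hi : i ≤ f.d) : 1 ≤ f.θ i :=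
  f.θ_one.trans (f.strictMonoOn_θ.monotoneOn ⟨le_rfl, f.d_pos⟩ ⟨h1, hi⟩ h1)

lemma continuous_eval : Continuous f.eval :=
  continuous_finsetSum _ fun _ hi => continuous_const.mul <| Real.continuous_rpow_const <|
    zero_le_one.trans (f.one_le_θ (mem_Icc.mp hi).1 (mem_Icc.mp hi).2)

lemma eval_eq_rpow_mul {x : ℝ} (hx : 0 < x) :
    f.eval x = x ^ f.θ f.d * (f.a f.d + ∑ i ∈ Ico 1 f.d, f.a i * x ^ (f.θ i - f.θ f.d)) := by
  rw [eval, ← Finset.Ico_add_one_right_eq_Icc, sum_Ico_succ_top f.d_pos, mul_add, mul_sum,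
    add_comm (x ^ f.θ f.d * f.a f.d)]
  congr 1
  · refine sum_congr rfl fun i _ => ?_
    rw [Real.rpow_sub hx]
    field_simp
  · ring

lemma tendsto_eval_atTop : Tendsto f.eval atTop atTop := by
  have hlower : Tendsto (fun x => f.a f.d + ∑ i ∈ Ico 1 f.d, f.a i * x ^ (f.θ i - f.θ f.d))
      atTop (𝓝 (f.a f.d)) := by
    have hterms : ∀ i ∈ Ico 1 f.d,
        Tendsto (fun x : ℝ => f.a i * x ^ (f.θ i - f.θ f.d)) atTop (𝓝 (f.a i * 0)) := by
      intro i hi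
      rw [← neg_sub]
      exact (tendsto_rpow_neg_atTop
        (sub_pos.mpr (f.θ_lt_θ_d (mem_Ico.mp hi).1 (mem_Ico.mp hi).2))).const_mul _
    simpa using tendsto_const_nhds.add (tendsto_finsetSum _ hterms)
  refine ((tendsto_rpow_atTop (by linarith [f.one_le_θ f.d_pos le_rfl])).atTop_mul_pos
    f.a_pos hlower).congr' ?_
  filter_upwards [eventually_gt_atTop 0] with x hx
  exact (f.eval_eq_rpow_mul hx).symm

def coeffAbsSum : ℝ := ∑ i ∈ Icc 1 f.d, |f.a i|

lemma coeffAbsSum_pos : 0 < f.coeffAbsSum :=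
  f.a_pos.trans_le <| (le_abs_self _).trans <|
    single_le_sum (fun i _ => abs_nonneg (f.a i)) (mem_Icc.mpr ⟨f.d_pos, le_rfl⟩)

lemma eval_le_coeffAbsSum_mul_rpow {x : ℝ} (hx : 1 ≤ x) :
    f.eval x ≤ f.coeffAbsSum * x ^ f.θ f.d := by
  rw [eval, coeffAbsSum, sum_mul]
  refine sum_le_sum fun i hi => ?_
  obtain ⟨h1, hi⟩ := mem_Icc.mp hi
  exact mul_le_mul (le_abs_self _) (Real.rpow_le_rpow_of_exponent_le hx (f.θ_le_θ_d h1 hi))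
    (by positivity) (abs_nonneg _)

lemma one_le_of_isLargestRoot {N P : ℝ} (hN : f.eval 1 ≤ N) (hP : f.IsLargestRoot N P) :
    1 ≤ P := by
  obtain ⟨x, hxN, hx1⟩ :=
    ((f.tendsto_eval_atTop.eventually_ge_atTop N).and (eventually_ge_atTop 1)).exists
  obtain ⟨y, hy, hyN⟩ := intermediate_value_Icc hx1 f.continuous_eval.continuousOn ⟨hN, hxN⟩
  exact hy.1.trans (hP.2 y hyN)

end PseudoPoly

lemma V_eq_mul_rpowExpSum (f : PseudoPoly) (N : ℕ) (α : ℝ) :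
    V f N α = (((1 / f.a f.d) ^ (1 / f.θ f.d) * (1 / f.θ f.d) : ℝ) : ℂ) *
      rpowExpSum (1 / f.θ f.d) N α :=
  rfl

@[fun_prop]
lemma continuous_V (f : PseudoPoly) (N : ℕ) : Continuous (V f N) := by
  unfold V
  fun_prop

lemma exists_norm_V_le (f : PseudoPoly) : ∃ K > 0, ∀ (N : ℕ) (α : ℝ),
    ‖V f N α‖ ≤ K * (N : ℝ) ^ (1 / f.θ f.d) ∧
      (0 < |α| → |α| ≤ 1 / 2 → ‖V f N α‖ ≤ K * |α| ^ (-(1 / f.θ f.d))) := by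
  set β := 1 / f.θ f.d
  have hθ := f.one_le_θ f.d_pos le_rfl
  have hβ0 : 0 < β := by positivity
  have hβ1 : β ≤ 1 := (div_le_one (by positivity)).mpr hθ
  set c := (1 / f.a f.d) ^ β * β
  have hc : 0 < c := by have := f.a_pos; positivity
  refine ⟨c * (1 / β + 1), by positivity, fun N α => ⟨?_, fun h0 h2 => ?_⟩⟩ <;>
    rw [V_eq_mul_rpowExpSum, norm_mul, Complex.norm_real, Real.norm_of_nonneg hc.le]
  · refine (mul_le_mul_of_nonneg_left ((norm_rpowExpSum_le hβ0 hβ1 N α).trans ?_) hc.le).trans_eq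
      (mul_assoc _ _ _).symm
    rw [add_mul, one_div_mul_eq_div]
    linarith [Real.rpow_nonneg (Nat.cast_nonneg N) β]
  · exact (mul_le_mul_of_nonneg_left (norm_rpowExpSum_le_abs_rpow_neg hβ0 hβ1 N h0 h2)
      hc.le).trans_eq (mul_assoc _ _ _).symm

section IntegralBounds

variable {E : Type*} [NormedAddCommGroup E] [NormedSpace ℝ E] {g : ℝ → E} {δ b D γ : ℝ}

lemma norm_intervalIntegral_le_of_norm_le_rpow_neg (hδ : 0 < δ) (hδb : δ ≤ b) (hγ : 1 < γ)
    (hD : ∀ α ∈ Set.Icc δ b, ‖g α‖ ≤ D * α ^ (-γ)) :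
    ‖∫ α in δ..b, g α‖ ≤ D * δ ^ (1 - γ) / (γ - 1) := by
  have hD0 : 0 ≤ D := nonneg_of_mul_nonneg_left ((norm_nonneg _).trans (hD δ ⟨le_rfl, hδb⟩))
    (Real.rpow_pos_of_pos hδ _)
  have hzero : (0 : ℝ) ∉ Set.uIcc δ b := by
    rw [Set.uIcc_of_le hδb]; exact fun h => absurd h.1 (not_le.mpr hδ)
  have hint : IntervalIntegrable (fun α => D * α ^ (-γ)) MeasureTheory.volume δ b :=
    (intervalIntegral.intervalIntegrable_rpow (Or.inr hzero)).const_mul D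
  calc ‖∫ α in δ..b, g α‖ ≤ ∫ α in δ..b, D * α ^ (-γ) :=
        intervalIntegral.norm_integral_le_of_norm_le hδb
          (MeasureTheory.ae_of_all _ fun α hα => hD α (Set.Ioc_subset_Icc_self hα)) hint
    _ = D * ((δ ^ (1 - γ) - b ^ (1 - γ)) / (γ - 1)) := by
        rw [intervalIntegral.integral_const_mul,
          integral_rpow (Or.inr ⟨by linarith, hzero⟩), show -γ + 1 = -(γ - 1) by ring,
          show 1 - γ = -(γ - 1) by ring, div_neg, ← neg_div, neg_sub]
    _ ≤ D * δ ^ (1 - γ) / (γ - 1) := by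
        rw [mul_div_assoc]
        gcongr
        linarith [Real.rpow_nonneg (hδ.le.trans hδb) (1 - γ)]

lemma norm_intervalIntegral_symm_le (hg : Continuous g) (hδ : 0 < δ) (hδb : δ ≤ b)
    (hγ : 1 < γ) {M : ℝ} (hM : ∀ α, ‖g α‖ ≤ M)
    (hD : ∀ α, δ ≤ |α| → |α| ≤ b → ‖g α‖ ≤ D * |α| ^ (-γ)) :
    ‖∫ α in -b..b, g α‖ ≤ 2 * δ * M + 2 * (D * δ ^ (1 - γ) / (γ - 1)) := by
  have hright : ‖∫ α in δ..b, g α‖ ≤ D * δ ^ (1 - γ) / (γ - 1) :=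
    norm_intervalIntegral_le_of_norm_le_rpow_neg hδ hδb hγ fun α hα => by
      have h := hD α
      rw [abs_of_pos (hδ.trans_le hα.1)] at h
      exact h hα.1 hα.2
  have hleft : ‖∫ α in -b..-δ, g α‖ ≤ D * δ ^ (1 - γ) / (γ - 1) := by
    rw [← intervalIntegral.integral_comp_neg]
    exact norm_intervalIntegral_le_of_norm_le_rpow_neg hδ hδb hγ fun α hα => by
      have h := hD (-α)
      rw [abs_neg, abs_of_pos (hδ.trans_le hα.1)] at h
      exact h hα.1 hα.2
  have hmid : ‖∫ α in -δ..δ, g α‖ ≤ 2 * δ * M :=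
    (intervalIntegral.norm_integral_le_of_norm_le_const fun α _ => hM α).trans_eq (by
      rw [sub_neg_eq_add, abs_of_pos (by linarith)]; ring)
  have hi (a a' : ℝ) : IntervalIntegrable g MeasureTheory.volume a a' := hg.intervalIntegrable _ _
  rw [← intervalIntegral.integral_add_adjacent_intervals (hi (-b) (-δ)) (hi (-δ) b),
    ← intervalIntegral.integral_add_adjacent_intervals (hi (-δ) δ) (hi δ b)]
  refine (norm_add_le _ _).trans ((add_le_add_right (norm_add_le _ _) _).trans ?_)
  linarith

end IntegralBounds

lemma exists_norm_singularIntegral_le (f : PseudoPoly) (s : ℕ) (hs : f.θ f.d < s) :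
    ∃ C > 0, ∀ N : ℕ, 2 ≤ N →
      ‖∫ α in (-(1 / 2 : ℝ))..(1 / 2 : ℝ), V f N α ^ s * e (-α * N)‖ ≤
        C * (N : ℝ) ^ (s / f.θ f.d - 1) := by
  obtain ⟨K, hK, hV⟩ := exists_norm_V_le f
  have hθ : 0 < f.θ f.d := by linarith [f.one_le_θ f.d_pos le_rfl]
  set γ := (s : ℝ) / f.θ f.d
  have hγ : 1 < γ := (one_lt_div hθ).mpr hs
  have hγ1 : 0 < γ - 1 := by linarith
  have hpow {x y : ℝ} (hx : 0 ≤ x) {z : ℂ} (hz : ‖z‖ ≤ K * x ^ y) :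
      ‖z‖ ^ s ≤ K ^ s * x ^ (y * s) :=
    (pow_le_pow_left₀ (norm_nonneg _) hz s).trans_eq <| by
      rw [mul_pow, ← Real.rpow_natCast (x ^ y), ← Real.rpow_mul hx]
  refine ⟨K ^ s * (2 + 2 / (γ - 1)), by positivity, fun N hN => ?_⟩
  have hN0 : (0 : ℝ) < N := by positivity
  have hnorm (α : ℝ) : ‖V f N α ^ s * e (-α * N)‖ = ‖V f N α‖ ^ s := by
    rw [norm_mul, norm_pow, norm_e, mul_one]
  have hbound := norm_intervalIntegral_symm_le (g := fun α => V f N α ^ s * e (-α * N))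
    (b := 1 / 2) (M := K ^ s * (N : ℝ) ^ γ) (D := K ^ s)
    (by fun_prop) (inv_pos.mpr hN0) (by rw [one_div]; gcongr; exact_mod_cast hN) hγ
    (fun α => by
      rw [hnorm, show γ = 1 / f.θ f.d * s from (one_div_mul_eq_div _ _).symm]
      exact hpow (Nat.cast_nonneg N) (hV N α).1)
    (fun α h1 h2 => by
      rw [hnorm, show -γ = -(1 / f.θ f.d) * s by rw [neg_mul, one_div_mul_eq_div]]
      exact hpow (abs_nonneg α) ((hV N α).2 ((inv_pos.mpr hN0).trans_le h1) h2))
  refine hbound.trans_eq ?_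
  rw [Real.inv_rpow hN0.le, ← Real.rpow_neg hN0.le, neg_sub, Real.rpow_sub_one hN0.ne']
  field_simp

/-- For `s > θ_d`, the singular integral `J(N) = ∫_{−1/2}^{1/2} V(α)^s e(−αN) dα`
satisfies `J(N) ≪ P^{s − θ_d}`. -/
theorem singularIntegral_bound (f : PseudoPoly) (s : ℕ) (hs : f.θ f.d < (s : ℝ)) :
    ∃ C > (0 : ℝ), ∃ N₀ : ℕ, ∀ N : ℕ, N₀ ≤ N → ∀ P : ℝ, f.IsLargestRoot N P →
      ‖∫ α in (-(1 / 2 : ℝ))..(1 / 2 : ℝ), V f N α ^ s * e (-α * N)‖ ≤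
        C * P ^ ((s : ℝ) - f.θ f.d) := by
  obtain ⟨C, hC, hJ⟩ := exists_norm_singularIntegral_le f s hs
  set A := f.coeffAbsSum
  have hA := f.coeffAbsSum_pos
  have hθ : 0 < f.θ f.d := by linarith [f.one_le_θ f.d_pos le_rfl]
  have hu : 0 ≤ (s : ℝ) / f.θ f.d - 1 := by rw [sub_nonneg, one_le_div hθ]; exact hs.le
  refine ⟨C * A ^ ((s : ℝ) / f.θ f.d - 1), by positivity, ⌈A⌉₊ + 2, fun N hN P hP => ?_⟩
  have hAN : A ≤ N := (Nat.le_ceil A).trans (by exact_mod_cast (by omega : ⌈A⌉₊ ≤ N))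
  have hP1 : 1 ≤ P := f.one_le_of_isLargestRoot
    ((f.eval_le_coeffAbsSum_mul_rpow le_rfl).trans (by rwa [Real.one_rpow, mul_one])) hP
  have hNP : (N : ℝ) ≤ A * P ^ f.θ f.d := hP.1 ▸ f.eval_le_coeffAbsSum_mul_rpow hP1
  calc _ ≤ C * (N : ℝ) ^ ((s : ℝ) / f.θ f.d - 1) := hJ N (by omega)
    _ ≤ C * (A * P ^ f.θ f.d) ^ ((s : ℝ) / f.θ f.d - 1) := by gcongr
    _ = C * A ^ ((s : ℝ) / f.θ f.d - 1) * P ^ ((s : ℝ) - f.θ f.d) := by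
      rw [Real.mul_rpow hA.le (by positivity), ← Real.rpow_mul (by positivity), mul_sub,
        mul_div_cancel₀ _ hθ.ne', mul_one, mul_assoc]
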